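/- arXiv:2408.09997 — 2 statements merged into one kernel-verified Lean document; each statement's English description precedes it below -/
import Mathlib

section
/- In any 2-qBMG, there is no induced path v1v2v3v4v5 in the underlying undirected graph with directed edges v2v1 and v2v3 both present (i.e., v2 has two out-neighbors, its endpoints on the chordless path). -/
def QN1 {V : Type*} (E : V → V → Prop) : Prop :=
  ∀ u v, u ≠ v → ¬ E u v → ¬ E v u → ¬ ∃ w t, E u t ∧ E v w ∧ E t w

def QN2 {V : Type*} (E : V → V → Prop) : Prop :=
  ∀ u v w t, E u v → E v w → E w t → E u t

def QN3 {V : Type*} (E : V → V → Prop) : Prop :=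
  ∀ u v, (∃ w, E u w ∧ E v w) → (∀ w, E u w → E v w) ∨ (∀ w, E v w → E u w)

def QBip {V : Type*} (c : V → Bool) (E : V → V → Prop) : Prop :=
  ∀ u v, E u v → c u ≠ c v

/-- A 2-colored quasi best match graph: bipartite digraph satisfying (N1), (N2), (N3). -/
def IsQBMG {V : Type*} (c : V → Bool) (E : V → V → Prop) : Prop :=
  QBip c E ∧ QN1 E ∧ QN2 E ∧ QN3 E

/-- Adjacency in the underlying undirected graph. -/
def QAdj {V : Type*} (E : V → V → Prop) (u v : V) : Prop := E u v ∨ E v u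

/-! Both orientations of `v3v4` make `v2` adjacent to `v5`, unless `v4 → v1`. If `v3 → v4`, the
directed path `v2 → v3 → v4` and the edge `v4v5` give `v2 ~ v5` by (N2) or (N1). If `v4 → v3`,
then `v2` and `v4` share the out-neighbour `v3`, so by (N3) either `N⁺(v2) ⊆ N⁺(v4)`, whence
`v4 → v1`, or `N⁺(v4) ⊆ N⁺(v2)`, and the edge `v4v5` again gives `v2 ~ v5`. -/

section

variable {V : Type*} {E : V → V → Prop} {u v w x : V}

theorem QAdj.symm (h : QAdj E u v) : QAdj E v u := Or.symm h

theorem QN1.qAdj (hN1 : QN1 E) (hux : u ≠ x) (huv : E u v) (hxw : E x w) (hvw : E v w) :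
    QAdj E u x := by
  by_contra hn
  exact hN1 u x hux (fun h => hn (Or.inl h)) (fun h => hn (Or.inr h)) ⟨w, v, huv, hxw, hvw⟩

theorem qAdj_of_edge_edge_qAdj (hN1 : QN1 E) (hN2 : QN2 E) (hux : u ≠ x)
    (huv : E u v) (hvw : E v w) (hwx : QAdj E w x) : QAdj E u x := by
  rcases hwx with hwx | hxw
  · exact Or.inl (hN2 u v w x huv hvw hwx)
  · exact hN1.qAdj hux huv hxw hvw

theorem qAdj_of_common_outNeighbor_of_subset (hN1 : QN1 E) (hux : u ≠ x)
    (huv : E u v) (hwv : E w v) (hsub : ∀ y, E w y → E u y) (hwx : QAdj E w x) :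
    QAdj E u x := by
  rcases hwx with hwx | hxw
  · exact Or.inl (hsub x hwx)
  · exact (hN1.qAdj hux.symm hxw huv hwv).symm

end

theorem no_out_out_P5_general {V : Type*} (c : V → Bool) (E : V → V → Prop)
    (h : IsQBMG c E) (v1 v2 v3 v4 v5 : V)
    (a34 : QAdj E v3 v4) (a45 : QAdj E v4 v5)
    (n14 : ¬ QAdj E v1 v4)
    (n24 : ¬ QAdj E v2 v4) (n25 : ¬ QAdj E v2 v5) :
    ¬ (E v2 v1 ∧ E v2 v3) := by
  rintro ⟨h21, h23⟩
  obtain ⟨-, hN1, hN2, hN3⟩ := h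
  have ne25 : v2 ≠ v5 := by
    rintro rfl
    exact n24 a45.symm
  rcases a34 with h34 | h43
  · exact n25 (qAdj_of_edge_edge_qAdj hN1 hN2 ne25 h23 h34 a45)
  · rcases hN3 v2 v4 ⟨v3, h23, h43⟩ with h24 | h42
    · exact n14 (Or.inr (h24 v1 h21))
    · exact n25 (qAdj_of_common_outNeighbor_of_subset hN1 ne25 h23 h43 h42 a45)

theorem no_out_out_P5 {V : Type*} (c : V → Bool) (E : V → V → Prop)
    (h : IsQBMG c E) (v1 v2 v3 v4 v5 : V)
    (hne : [v1, v2, v3, v4, v5].Pairwise (· ≠ ·))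
    (a12 : QAdj E v1 v2) (a23 : QAdj E v2 v3) (a34 : QAdj E v3 v4) (a45 : QAdj E v4 v5)
    (n13 : ¬ QAdj E v1 v3) (n14 : ¬ QAdj E v1 v4) (n15 : ¬ QAdj E v1 v5)
    (n24 : ¬ QAdj E v2 v4) (n25 : ¬ QAdj E v2 v5) (n35 : ¬ QAdj E v3 v5) :
    ¬ (E v2 v1 ∧ E v2 v3) :=
  no_out_out_P5_general c E h v1 v2 v3 v4 v5 a34 a45 n14 n24 n25
end

section
/- Let G be a 2-qBMG, Γ an orientation of G admitting a topological ordering, and Δ the subdigraph of Γ induced on a biclique T ∪ Z of the underlying undirected graph of G. If G has no symmetric edges with both endpoints in T ∪ Z, then Δ satisfies (N3): whenever two vertices of Δ have a common out-neighbor in Δ, the out-neighborhood in Δ of one contains that of the other. -/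
theorem QN3.comap {V W : Type*} {E : V → V → Prop} (hE : QN3 E) (g : W → V) :
    QN3 (fun a b => E (g a) (g b)) := by
  rintro u v ⟨w, huw, hvw⟩
  exact (hE (g u) (g v) ⟨g w, huw, hvw⟩).imp (fun h x => h (g x)) (fun h x => h (g x))

theorem orientation_iff_of_not_symmetric {V : Type*} {E Γ : V → V → Prop}
    (hsub : ∀ u v, Γ u v → E u v) (hcover : ∀ u v, E u v → Γ u v ∨ Γ v u)
    {u v : V} (hasymm : ¬ (E u v ∧ E v u)) : Γ u v ↔ E u v :=
  ⟨hsub u v, fun huv => (hcover u v huv).resolve_right fun hvu => hasymm ⟨huv, hsub v u hvu⟩⟩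

theorem biclique_orientation_N3_general {V : Type*} (c : V → Bool) (E Γ : V → V → Prop)
    (hqbmg : IsQBMG c E)
    (hsub : ∀ u v, Γ u v → E u v)
    (hcover : ∀ u v, E u v → Γ u v ∨ Γ v u)
    (T Z : Set V)
    (hnosym : ∀ u ∈ T ∪ Z, ∀ v ∈ T ∪ Z, ¬ (E u v ∧ E v u)) :
    QN3 (fun u v : (T ∪ Z : Set V) => Γ u.val v.val) := by
  have hΓE : (fun u v : (T ∪ Z : Set V) => Γ u.val v.val) = fun u v => E u.val v.val := by
    funext u v
    exact propext (orientation_iff_of_not_symmetric hsub hcover (hnosym u u.2 v v.2))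
  rw [hΓE]
  exact hqbmg.2.2.2.comap Subtype.val

theorem biclique_orientation_N3 {V : Type*} (c : V → Bool) (E Γ : V → V → Prop)
    (hqbmg : IsQBMG c E)
    (hsub : ∀ u v, Γ u v → E u v)
    (horient : ∀ u v, Γ u v → ¬ Γ v u)
    (hcover : ∀ u v, E u v → Γ u v ∨ Γ v u)
    (f : V → ℕ) (htopo : ∀ u v, Γ u v → f u < f v)
    (T Z : Set V) (hdisj : Disjoint T Z)
    (hbic : ∀ u ∈ T ∪ Z, ∀ v ∈ T ∪ Z,
      (QAdj Γ u v ↔ ((u ∈ T ∧ v ∈ Z) ∨ (u ∈ Z ∧ v ∈ T))))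
    (hnosym : ∀ u ∈ T ∪ Z, ∀ v ∈ T ∪ Z, ¬ (E u v ∧ E v u)) :
    QN3 (fun u v : (T ∪ Z : Set V) => Γ u.val v.val) :=
  biclique_orientation_N3_general c E Γ hqbmg hsub hcover T Z hnosym
end
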